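/- Let β ∈ (0,1/3), β0 ∈ [2β, 1-β), and γ : [t0,∞) → (0,∞) nonincreasing, C², with γ''(t) ≥ 2β²γ(t)³ for all t ≥ t0. With p(t) = exp(∫_{t0}^t γ), θ(t) = β0 p(t)^β γ(t), and η(t) = -β0 p(t)^{2β}((β0+2β-1)γ(t)² + γ'(t)), one has θ(t)θ'(t) + η'(t)/2 ≤ 0 for all t ≥ t0. -/

import Mathlib

/-!
Writing `q = p ^ β`, one has `p' = γ p`, and a direct computation gives
`θ θ' + η' / 2 = -β0 q ^ 2 (β (2β - 1) γ ^ 3 + (3β - 1) γ γ' + γ'' / 2)`.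
Using `γ'' ≥ 2 β ^ 2 γ ^ 3`, the bracket is at least `(1 - 3β) γ (-(γ' + β γ ^ 2))`, which is
nonnegative once `γ' ≤ -β γ ^ 2`. The latter holds because `γ' ^ 2 - β ^ 2 γ ^ 4` is nonincreasing
(its derivative is `2 γ' (γ'' - 2 β ^ 2 γ ^ 3) ≤ 0`) and tends to `0`: a positive nonincreasing `γ`
with `γ'' ≥ 2 β ^ 2 γ ^ 3` must tend to `0`, since otherwise `γ'` would grow without bound.
-/

open Set Filter Topology

lemma monotoneOn_Ici_of_hasDerivWithinAt_nonneg {a : ℝ} {f f' : ℝ → ℝ}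
    (hf : ∀ t ∈ Ici a, HasDerivWithinAt f (f' t) (Ici a) t) (hf' : ∀ t ∈ Ici a, 0 ≤ f' t) :
    MonotoneOn f (Ici a) :=
  monotoneOn_of_hasDerivWithinAt_nonneg (convex_Ici a) (fun t ht => (hf t ht).continuousWithinAt)
    (fun t ht => (hf t (interior_subset ht)).mono interior_subset)
    (fun t ht => hf' t (interior_subset ht))

lemma antitoneOn_Ici_of_hasDerivWithinAt_nonpos {a : ℝ} {f f' : ℝ → ℝ}
    (hf : ∀ t ∈ Ici a, HasDerivWithinAt f (f' t) (Ici a) t) (hf' : ∀ t ∈ Ici a, f' t ≤ 0) :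
    AntitoneOn f (Ici a) :=
  antitoneOn_of_hasDerivWithinAt_nonpos (convex_Ici a) (fun t ht => (hf t ht).continuousWithinAt)
    (fun t ht => (hf t (interior_subset ht)).mono interior_subset)
    (fun t ht => hf' t (interior_subset ht))

lemma tendsto_atTop_of_hasDerivWithinAt_ge {a c : ℝ} {f f' : ℝ → ℝ} (hc : 0 < c)
    (hf : ∀ t ∈ Ici a, HasDerivWithinAt f (f' t) (Ici a) t) (hf' : ∀ t ∈ Ici a, c ≤ f' t) :
    Tendsto f atTop atTop := by
  have hmono : MonotoneOn (fun t => f t - c * t) (Ici a) :=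
    monotoneOn_Ici_of_hasDerivWithinAt_nonneg
      (fun t ht => (hf t ht).sub ((hasDerivWithinAt_id t _).const_mul c))
      (fun t ht => by simpa using hf' t ht)
  have hlin : Tendsto (fun t => f a + c * (t - a)) atTop atTop :=
    tendsto_atTop_add_const_left _ _
      ((tendsto_atTop_add_const_right _ _ tendsto_id).const_mul_atTop hc)
  refine tendsto_atTop_mono' _ ?_ hlin
  filter_upwards [eventually_ge_atTop a] with t ht
  have := hmono self_mem_Ici ht ht
  simp only at this
  linarith

lemma HasDerivWithinAt.nonpos_of_antitoneOn_Ici {a t g' : ℝ} {g : ℝ → ℝ}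
    (hd : HasDerivWithinAt g g' (Ici a) t) (hg : AntitoneOn g (Ici a)) (ht : t ∈ Ici a) :
    g' ≤ 0 := by
  simpa [hd.derivWithin (uniqueDiffOn_Ici a t ht)] using hg.derivWithin_nonpos (x := t)

lemma hasDerivWithinAt_intervalIntegral_Ici {a t : ℝ} {f : ℝ → ℝ} (hf : ContinuousOn f (Ici a))
    (ht : t ∈ Ici a) : HasDerivWithinAt (fun u => ∫ s in a..u, f s) (f t) (Ici a) t := by
  have : Fact (t ∈ Icc a (t + 1)) := ⟨⟨ht, by linarith⟩⟩
  have hsub : Icc a (t + 1) ⊆ Ici a := Icc_subset_Ici_self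
  refine HasDerivWithinAt.mono_of_mem_nhdsWithin (t := Icc a (t + 1)) ?_ ?_
  · refine intervalIntegral.integral_hasDerivWithinAt_right ?_ ?_ ((hf t ht).mono hsub)
    · exact (hf.mono (by rw [uIcc_of_le ht]; exact Icc_subset_Ici_self)).intervalIntegrable
    · exact ⟨Icc a (t + 1), self_mem_nhdsWithin,
        (hf.mono hsub).aestronglyMeasurable measurableSet_Icc⟩
  · exact mem_nhdsWithin.2 ⟨Iio (t + 1), isOpen_Iio, by simp, fun s hs => ⟨hs.2, hs.1.le⟩⟩

lemma hasDerivWithinAt_exp_integral_rpow {a t : ℝ} {f : ℝ → ℝ} (hf : ContinuousOn f (Ici a))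
    (ht : t ∈ Ici a) (r : ℝ) :
    HasDerivWithinAt (fun u => Real.exp (∫ s in a..u, f s) ^ r)
      (r * f t * Real.exp (∫ s in a..t, f s) ^ r) (Ici a) t := by
  simp only [← Real.exp_mul]
  refine ((hasDerivWithinAt_intervalIntegral_Ici hf ht).mul_const r).exp.congr_deriv ?_
  ring

section SecondOrder

variable {a k : ℝ} {γ γ' γ'' : ℝ → ℝ}

lemma tendsto_nhds_zero_of_cube_le_second_deriv (hk : 0 < k) (hpos : ∀ t ∈ Ici a, 0 < γ t)
    (hanti : AntitoneOn γ (Ici a))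
    (hd1 : ∀ t ∈ Ici a, HasDerivWithinAt γ (γ' t) (Ici a) t)
    (hd2 : ∀ t ∈ Ici a, HasDerivWithinAt γ' (γ'' t) (Ici a) t)
    (hineq : ∀ t ∈ Ici a, k * γ t ^ 3 ≤ γ'' t) :
    Tendsto γ atTop (𝓝 0) := by
  have hsmall : ∀ ε > 0, ∃ s ∈ Ici a, γ s < ε := by
    intro ε hε
    by_contra! hge
    have hγ' : Tendsto γ' atTop atTop :=
      tendsto_atTop_of_hasDerivWithinAt_ge (by positivity : 0 < k * ε ^ 3) hd2 fun t ht =>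
        (mul_le_mul_of_nonneg_left (pow_le_pow_left₀ hε.le (hge t ht) 3) hk.le).trans (hineq t ht)
    obtain ⟨t, hγ't, ht⟩ := ((hγ'.eventually_gt_atTop 0).and (eventually_ge_atTop a)).exists
    exact ((hd1 t ht).nonpos_of_antitoneOn_Ici hanti ht).not_gt hγ't
  refine tendsto_order.2 ⟨fun b hb => ?_, fun ε hε => ?_⟩
  · filter_upwards [eventually_ge_atTop a] with t ht using hb.trans (hpos t ht)
  · obtain ⟨s, hs, hγs⟩ := hsmall ε hε
    filter_upwards [eventually_ge_atTop s] with t ht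
    exact (hanti hs (le_trans hs ht) ht).trans_lt hγs

lemma deriv_le_neg_mul_sq_of_second_deriv {β : ℝ} (hβ : 0 < β) (hpos : ∀ t ∈ Ici a, 0 < γ t)
    (hanti : AntitoneOn γ (Ici a))
    (hd1 : ∀ t ∈ Ici a, HasDerivWithinAt γ (γ' t) (Ici a) t)
    (hd2 : ∀ t ∈ Ici a, HasDerivWithinAt γ' (γ'' t) (Ici a) t)
    (hineq : ∀ t ∈ Ici a, 2 * β ^ 2 * γ t ^ 3 ≤ γ'' t) {t : ℝ} (ht : t ∈ Ici a) :
    γ' t ≤ -(β * γ t ^ 2) := by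
  have hγ'_nonpos : ∀ t ∈ Ici a, γ' t ≤ 0 := fun t ht =>
    (hd1 t ht).nonpos_of_antitoneOn_Ici hanti ht
  have hF : AntitoneOn (fun t => γ' t ^ 2 - β ^ 2 * γ t ^ 4) (Ici a) := by
    refine antitoneOn_Ici_of_hasDerivWithinAt_nonpos
      (f' := fun t => 2 * γ' t * (γ'' t - 2 * β ^ 2 * γ t ^ 3)) (fun t ht => ?_) (fun t ht => ?_)
    · refine (((hd2 t ht).fun_pow 2).fun_sub
        (((hd1 t ht).fun_pow 4).const_mul (β ^ 2))).congr_deriv ?_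
      norm_num
      ring
    · exact mul_nonpos_of_nonpos_of_nonneg (by linarith [hγ'_nonpos t ht])
        (sub_nonneg.2 (hineq t ht))
  have hlim : Tendsto (fun s => -(β ^ 2 * γ s ^ 4)) atTop (𝓝 0) := by
    simpa using ((tendsto_nhds_zero_of_cube_le_second_deriv (by positivity) hpos hanti hd1 hd2
      hineq).pow 4).const_mul (β ^ 2) |>.neg
  have hF_nonneg : 0 ≤ γ' t ^ 2 - β ^ 2 * γ t ^ 4 := by
    refine le_of_tendsto hlim ?_
    filter_upwards [eventually_ge_atTop t] with s hs
    linarith [hF ht (le_trans ht hs) hs, sq_nonneg (γ' s)]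
  nlinarith [hγ'_nonpos t ht, hpos t ht]

end SecondOrder

theorem stmt_10_general (t0 β β0 : ℝ)
    (hβ : β ∈ Set.Ioo (0:ℝ) (1/3)) (hβ0 : β0 ∈ Set.Ico (2*β) (1-β))
    (γ γ' γ'' : ℝ → ℝ)
    (hpos : ∀ t ∈ Ici t0, 0 < γ t)
    (hanti : AntitoneOn γ (Ici t0))
    (hd1 : ∀ t ∈ Ici t0, HasDerivWithinAt γ (γ' t) (Ici t0) t)
    (hd2 : ∀ t ∈ Ici t0, HasDerivWithinAt γ' (γ'' t) (Ici t0) t)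
    (hineq : ∀ t ∈ Ici t0, 2 * β ^ 2 * γ t ^ 3 ≤ γ'' t)
    (p θ η θ' η' : ℝ → ℝ)
    (hp : ∀ t, p t = Real.exp (∫ s in t0..t, γ s))
    (hθ : ∀ t, θ t = β0 * p t ^ β * γ t)
    (hη : ∀ t, η t = -β0 * p t ^ (2*β) * ((β0 + 2*β - 1) * γ t ^ 2 + γ' t))
    (hθ' : ∀ t ∈ Ici t0, HasDerivWithinAt θ (θ' t) (Ici t0) t)
    (hη' : ∀ t ∈ Ici t0, HasDerivWithinAt η (η' t) (Ici t0) t) :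
    ∀ t ∈ Ici t0, θ t * θ' t + η' t / 2 ≤ 0 := by
  intro t ht
  have hu : UniqueDiffWithinAt ℝ (Ici t0) t := uniqueDiffOn_Ici t0 t ht
  have hp_rpow (r : ℝ) :
      HasDerivWithinAt (fun s => p s ^ r) (r * γ t * p t ^ r) (Ici t0) t := by
    simp only [hp]
    exact hasDerivWithinAt_exp_integral_rpow (fun s hs => (hd1 s hs).continuousWithinAt) ht r
  have hθ't : θ' t = β0 * p t ^ β * (β * γ t ^ 2 + γ' t) := by
    refine hu.eq_deriv _ (hθ' t ht) ?_
    rw [funext hθ]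
    refine (((hp_rpow β).const_mul β0).fun_mul (hd1 t ht)).congr_deriv ?_
    ring
  have hη't : η' t = -β0 * p t ^ (2 * β) * (2 * β * (β0 + 2 * β - 1) * γ t ^ 3
      + (6 * β + 2 * β0 - 2) * γ t * γ' t + γ'' t) := by
    refine hu.eq_deriv _ (hη' t ht) ?_
    rw [funext hη]
    refine (((hp_rpow (2 * β)).const_mul (-β0)).fun_mul
      ((((hd1 t ht).fun_pow 2).const_mul (β0 + 2 * β - 1)).fun_add (hd2 t ht))).congr_deriv ?_
    norm_num
    ring
  have hp_sq : p t ^ (2 * β) = (p t ^ β) ^ 2 := by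
    rw [two_mul, Real.rpow_add (by rw [hp]; positivity), sq]
  have hγ' := deriv_le_neg_mul_sq_of_second_deriv hβ.1 hpos hanti hd1 hd2 hineq ht
  have hbracket : 0 ≤ β * (2 * β - 1) * γ t ^ 3 + (3 * β - 1) * γ t * γ' t + γ'' t / 2 := by
    nlinarith [hineq t ht, mul_nonneg (mul_nonneg (by linarith [hβ.2] : (0:ℝ) ≤ 1 - 3 * β)
      (hpos t ht).le) (by linarith : 0 ≤ -(γ' t + β * γ t ^ 2))]
  calc θ t * θ' t + η' t / 2
      = -(β0 * (p t ^ β) ^ 2 *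
          (β * (2 * β - 1) * γ t ^ 3 + (3 * β - 1) * γ t * γ' t + γ'' t / 2)) := by
        rw [hθ t, hθ't, hη't, hp_sq]; ring
    _ ≤ 0 := neg_nonpos.2 (mul_nonneg (mul_nonneg (by linarith [hβ.1, hβ0.1]) (sq_nonneg _))
        hbracket)

theorem stmt_10 (t0 β β0 : ℝ)
    (hβ : β ∈ Set.Ioo (0:ℝ) (1/3)) (hβ0 : β0 ∈ Set.Ico (2*β) (1-β))
    (γ γ' γ'' : ℝ → ℝ)
    (hpos : ∀ t ∈ Ici t0, 0 < γ t)
    (hanti : AntitoneOn γ (Ici t0))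
    (hd1 : ∀ t ∈ Ici t0, HasDerivWithinAt γ (γ' t) (Ici t0) t)
    (hd2 : ∀ t ∈ Ici t0, HasDerivWithinAt γ' (γ'' t) (Ici t0) t)
    (hc2 : ContinuousOn γ'' (Ici t0))
    (hineq : ∀ t ∈ Ici t0, 2 * β ^ 2 * γ t ^ 3 ≤ γ'' t)
    (p θ η θ' η' : ℝ → ℝ)
    (hp : ∀ t, p t = Real.exp (∫ s in t0..t, γ s))
    (hθ : ∀ t, θ t = β0 * p t ^ β * γ t)
    (hη : ∀ t, η t = -β0 * p t ^ (2*β) * ((β0 + 2*β - 1) * γ t ^ 2 + γ' t))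
    (hθ' : ∀ t ∈ Ici t0, HasDerivWithinAt θ (θ' t) (Ici t0) t)
    (hη' : ∀ t ∈ Ici t0, HasDerivWithinAt η (η' t) (Ici t0) t) :
    ∀ t ∈ Ici t0, θ t * θ' t + η' t / 2 ≤ 0 :=
  stmt_10_general t0 β β0 hβ hβ0 γ γ' γ'' hpos hanti hd1 hd2 hineq p θ η θ' η' hp hθ hη hθ' hη'
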